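/- Let Φ = {φ_1, ..., φ_5} be five unit vectors in ℂ^2 forming a tight frame (∑_{j=1}^5 φ_j φ_j* = (5/2)·I_2) whose coherence equals 1/√2, i.e., max_{j ≠ l} |⟨φ_j, φ_l⟩| = 1/√2. Then the angle set A_Φ = { |⟨φ_j, φ_l⟩| : j ≠ l } has at least 3 elements. -/

import Mathlib

/-!
Send each vector of `ℂ²` to its Bloch vector in `ℝ³`: for unit vectors
`2 |⟪φ j, φ l⟫|² - 1 = y j ⬝ᵥ y l`, and tightness of the frame says `∑ j, y j = 0`.
Coherence `1/√2` makes `0` an off-diagonal entry of the Gram matrix `G` of the `y j`. With only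
two angles, `G = I + c A` for the adjacency matrix `A` of a graph on the five points; zero row
sums force this graph to be `d`-regular with `c d = -1`, and `d` is even because `5` is odd.
Then `(tr G)² ≤ rank G · ‖G‖²_F` reads `25 ≤ 3 · 5 (1 + 1/d)`, i.e. `d ≤ 3/2`, a contradiction.
-/

open Finset
open scoped ComplexConjugate InnerProductSpace

theorem Set.exists_subset_pair_of_ncard_lt_three {α : Type*} {s : Set α} {a : α}
    (hs : s.Finite) (ha : a ∈ s) (h : s.ncard < 3) : ∃ b, s ⊆ {a, b} := by
  by_contra! H
  obtain ⟨b, hb, hba⟩ := Set.not_subset.1 (H a)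
  obtain ⟨c, hc, hcab⟩ := Set.not_subset.1 (H b)
  have : 2 < s.ncard := (Set.two_lt_ncard_iff hs).2
    ⟨a, b, c, ha, hb, hc, fun h => hba (by simp [h]), fun h => hcab (by simp [h]),
      fun h => hcab (by simp [h])⟩
  omega

section Gram

variable {ι κ : Type*} [Fintype ι] [Fintype κ]

theorem sum_sq_dotProduct_eq (y : ι → κ → ℝ) :
    ∑ j, ∑ l, (y j ⬝ᵥ y l) ^ 2 = ∑ k, ∑ k', (∑ j, y j k * y j k') ^ 2 := by
  simp only [dotProduct, sq, sum_mul_sum]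
  simp_rw [sum_comm (s := (univ : Finset ι)) (t := (univ : Finset κ))]
  exact sum_congr rfl fun k _ => sum_congr rfl fun k' _ => sum_congr rfl fun j _ =>
    sum_congr rfl fun l _ => by ring

theorem sq_sum_dotProduct_self_le (y : ι → κ → ℝ) :
    (∑ j, y j ⬝ᵥ y j) ^ 2 ≤ Fintype.card κ * ∑ j, ∑ l, (y j ⬝ᵥ y l) ^ 2 := by
  have htrace : ∑ j, y j ⬝ᵥ y j = ∑ k, ∑ j, y j k * y j k := sum_comm
  have hdiag : ∑ k, (∑ j, y j k * y j k) ^ 2 ≤ ∑ k, ∑ k', (∑ j, y j k * y j k') ^ 2 :=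
    sum_le_sum fun k _ =>
      single_le_sum (f := fun k' => (∑ j, y j k * y j k') ^ 2) (fun _ _ => sq_nonneg _)
        (mem_univ k)
  calc (∑ j, y j ⬝ᵥ y j) ^ 2
      ≤ Fintype.card κ * ∑ k, (∑ j, y j k * y j k) ^ 2 := htrace ▸ sq_sum_le_card_mul_sum_sq
    _ ≤ _ := by
      rw [sum_sq_dotProduct_eq]
      gcongr

def nonorthogonalityGraph (y : ι → κ → ℝ) : SimpleGraph ι where
  Adj j l := j ≠ l ∧ y j ⬝ᵥ y l ≠ 0
  symm := ⟨fun _ _ h => ⟨h.1.symm, dotProduct_comm (y _) (y _) ▸ h.2⟩⟩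
  loopless := ⟨fun _ h => h.1 rfl⟩

theorem sum_pow_dotProduct_eq {y : ι → κ → ℝ}
    [DecidableRel (nonorthogonalityGraph y).Adj] {c : ℝ} {j : ι}
    (hc : ∀ l, j ≠ l → y j ⬝ᵥ y l ≠ 0 → y j ⬝ᵥ y l = c) {p : ℕ} (hp : p ≠ 0) :
    ∑ l, (y j ⬝ᵥ y l) ^ p = (y j ⬝ᵥ y j) ^ p + (nonorthogonalityGraph y).degree j * c ^ p := by
  classical
  have hterm (l : ι) : (y j ⬝ᵥ y l) ^ p = (if l = j then (y j ⬝ᵥ y j) ^ p else 0)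
      + if (nonorthogonalityGraph y).Adj j l then c ^ p else 0 := by
    by_cases hlj : l = j
    · subst hlj; simp
    by_cases hadj : (nonorthogonalityGraph y).Adj j l
    · simp [hlj, hadj, hc l hadj.1 hadj.2]
    · have : y j ⬝ᵥ y l = 0 := by
        simpa [nonorthogonalityGraph, Ne.symm hlj] using hadj
      simp [hlj, hadj, this, hp]
  rw [sum_congr rfl fun l _ => hterm l, sum_add_distrib, sum_ite_eq', if_pos (mem_univ j),
    ← sum_filter, sum_const, ← SimpleGraph.neighborFinset_eq_filter,
    SimpleGraph.card_neighborFinset_eq_degree, nsmul_eq_mul]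

theorem exists_dotProduct_ne_zero_and_ne (y : ι → κ → ℝ) (hunit : ∀ j, y j ⬝ᵥ y j = 1)
    (hsum : ∑ j, y j = 0) (hodd : Odd (Fintype.card ι))
    (hdim : 3 * Fintype.card κ < 2 * Fintype.card ι) (c : ℝ) :
    ∃ j l, j ≠ l ∧ y j ⬝ᵥ y l ≠ 0 ∧ y j ⬝ᵥ y l ≠ c := by
  classical
  by_contra! hc
  set G := nonorthogonalityGraph y
  have hrow (j : ι) : 1 + G.degree j * c = 0 := by
    have h := sum_pow_dotProduct_eq (hc j) one_ne_zero
    simp only [pow_one, ← dotProduct_sum, hsum, dotProduct_zero, hunit] at h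
    exact h.symm
  have hrow_sq (j : ι) : ∑ l, (y j ⬝ᵥ y l) ^ 2 = 1 - c := by
    rw [sum_pow_dotProduct_eq (hc j) two_ne_zero, hunit]
    linear_combination c * hrow j
  have hframe := sq_sum_dotProduct_self_le y
  simp only [hunit, hrow_sq, sum_const, card_univ, nsmul_eq_mul, mul_one] at hframe
  obtain ⟨j₀⟩ : Nonempty ι := Fintype.card_pos_iff.1 hodd.pos
  set d := G.degree j₀
  have hreg : G.IsRegularOfDegree d := fun j => by
    have hc0 : c ≠ 0 := fun h => by simpa [h] using hrow j
    have h : (G.degree j : ℝ) * c = d * c := by linear_combination hrow j - hrow j₀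
    exact_mod_cast mul_right_cancel₀ hc0 h
  have heven : Even d := by
    have h := G.sum_degrees_eq_twice_card_edges
    simp only [hreg.degree_eq, sum_const, card_univ, smul_eq_mul] at h
    exact (Nat.even_mul.1 (h ▸ even_two_mul _)).resolve_left (Nat.not_even_iff_odd.2 hodd)
  have hd : 2 ≤ d := by
    have : d ≠ 0 := fun h => by simpa [d, h] using hrow j₀
    obtain ⟨k, hk⟩ := heven
    omega
  have hd' : (2 : ℝ) ≤ d := by exact_mod_cast hd
  have hdc : 1 + d * c = 0 := hrow j₀
  have hc_le : -2 * c ≤ 1 := by nlinarith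
  have hn : (0 : ℝ) < Fintype.card ι := by exact_mod_cast hodd.pos
  have hn_le : (Fintype.card ι : ℝ) ≤ Fintype.card κ * (1 - c) := by nlinarith
  have hdim' : 3 * (Fintype.card κ : ℝ) < 2 * Fintype.card ι := by exact_mod_cast hdim
  nlinarith

end Gram

theorem sum_conj_mul_eq_of_forall_sum_inner_smul_eq {𝕜 ι n : Type*} [RCLike 𝕜] [Fintype ι]
    [Fintype n] [DecidableEq n] (φ : ι → EuclideanSpace 𝕜 n) (c : 𝕜)
    (htight : ∀ x, ∑ j, ⟪φ j, x⟫_𝕜 • φ j = c • x) (k m : n) :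
    ∑ j, conj (φ j k) * φ j m = if k = m then c else 0 := by
  have h := congrArg (· m) (htight (EuclideanSpace.single k 1))
  simpa [EuclideanSpace.inner_single_right, PiLp.single_apply, eq_comm] using h

/-- The coordinates of `v` against the Pauli matrices: `(⟪v, σₓ v⟫, ⟪v, σ_y v⟫, ⟪v, σ_z v⟫)`. -/
noncomputable def blochVector (v : EuclideanSpace ℂ (Fin 2)) : Fin 3 → ℝ :=
  ![2 * (conj (v 0) * v 1).re, 2 * (conj (v 0) * v 1).im, ‖v 0‖ ^ 2 - ‖v 1‖ ^ 2]

theorem sum_blochVector_eq_zero {ι : Type*} [Fintype ι] (φ : ι → EuclideanSpace ℂ (Fin 2))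
    (c : ℂ) (htight : ∀ x, ∑ j, ⟪φ j, x⟫_ℂ • φ j = c • x) : ∑ j, blochVector (φ j) = 0 := by
  have hS := sum_conj_mul_eq_of_forall_sum_inner_smul_eq φ c htight
  have hoff : ∑ j, conj (φ j 0) * φ j 1 = 0 := hS 0 1
  have hdiag (k : Fin 2) : ∑ j, ‖φ j k‖ ^ 2 = c.re := by
    simpa [Complex.conj_mul', ← Complex.ofReal_pow] using congrArg Complex.re (hS k k)
  ext i
  fin_cases i
  · simpa [blochVector, ← mul_sum] using congrArg Complex.re hoff
  · simpa [blochVector, ← mul_sum] using congrArg Complex.im hoff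
  · simp [blochVector, sum_sub_distrib, hdiag]

theorem blochVector_dotProduct (v w : EuclideanSpace ℂ (Fin 2)) :
    blochVector v ⬝ᵥ blochVector w = 2 * ‖⟪v, w⟫_ℂ‖ ^ 2 - ‖v‖ ^ 2 * ‖w‖ ^ 2 := by
  simp only [blochVector, dotProduct, Fin.sum_univ_three, EuclideanSpace.norm_sq_eq,
    PiLp.inner_apply, Fin.sum_univ_two, RCLike.inner_apply, Complex.sq_norm, Complex.normSq_apply]
  simp
  ring

theorem tight_grassmannian_5_2_triangular
    (φ : Fin 5 → EuclideanSpace ℂ (Fin 2))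
    (hunit : ∀ j, ‖φ j‖ = 1)
    (htight : ∀ x : EuclideanSpace ℂ (Fin 2),
      ∑ j, (inner ℂ (φ j) x : ℂ) • φ j = (5 / 2 : ℂ) • x)
    (hcoh : IsGreatest {r : ℝ | ∃ j l, j ≠ l ∧ ‖(inner ℂ (φ j) (φ l) : ℂ)‖ = r}
      (1 / Real.sqrt 2)) :
    3 ≤ {r : ℝ | ∃ j l, j ≠ l ∧ ‖(inner ℂ (φ j) (φ l) : ℂ)‖ = r}.ncard := by
  by_contra! hcard
  have hfin : {r : ℝ | ∃ j l, j ≠ l ∧ ‖⟪φ j, φ l⟫_ℂ‖ = r}.Finite :=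
    (Set.finite_range fun p : Fin 5 × Fin 5 => ‖⟪φ p.1, φ p.2⟫_ℂ‖).subset
      (by rintro _ ⟨j, l, -, rfl⟩; exact ⟨(j, l), rfl⟩)
  obtain ⟨b, hb⟩ := Set.exists_subset_pair_of_ncard_lt_three hfin hcoh.1 hcard
  have hy (j l : Fin 5) :
      blochVector (φ j) ⬝ᵥ blochVector (φ l) = 2 * ‖⟪φ j, φ l⟫_ℂ‖ ^ 2 - 1 := by
    simp [blochVector_dotProduct, hunit]
  have hy_unit (j : Fin 5) : blochVector (φ j) ⬝ᵥ blochVector (φ j) = 1 := by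
    rw [hy, inner_self_eq_norm_sq_to_K, hunit]
    norm_num
  obtain ⟨j, l, hjl, hne_zero, hne⟩ := exists_dotProduct_ne_zero_and_ne _ hy_unit
    (sum_blochVector_eq_zero φ _ htight) (by decide) (by decide) (2 * b ^ 2 - 1)
  rcases hb ⟨j, l, hjl, rfl⟩ with h | h
  · rw [hy, h] at hne_zero
    norm_num at hne_zero
  · exact hne (by rw [hy, h])
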